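/- arXiv:2007.08627 — 3 statements merged into one kernel-verified Lean document; each statement's English description precedes it below -/
import Mathlib

section
/- (Erdős–Gallai) Let l ≥ 2 and let G be a graph of order n. If the number of edges of G satisfies e(G) > (l−2)n/2, then G contains a path of order l as a subgraph. -/
open scoped Classical

/-- The signless Laplacian matrix `Q(G) = D(G) + A(G)` of a graph. -/
noncomputable def Qmat {V : Type*} [Fintype V] [DecidableEq V] (G : SimpleGraph V) :
    Matrix V V ℝ :=
  Matrix.diagonal (fun v => (G.degree v : ℝ)) + G.adjMatrix ℝ

/-- The signless Laplacian spectral radius `q(G)`: the largest eigenvalue of `Q(G)`. -/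
noncomputable def qspec {V : Type*} [Fintype V] [DecidableEq V] (G : SimpleGraph V) : ℝ :=
  sSup (spectrum ℝ (Qmat G))

/-- The number of edges `e(G)`. -/
noncomputable def ecount {V : Type*} (G : SimpleGraph V) : ℕ := G.edgeSet.ncard

/-- `Contains G H` : `G` contains a copy of `H` as a (not necessarily induced) subgraph. -/
def Contains {V W : Type*} (G : SimpleGraph V) (H : SimpleGraph W) : Prop :=
  ∃ f : W → V, Function.Injective f ∧ ∀ a b, H.Adj a b → G.Adj (f a) (f b)

/-- `k` vertex-disjoint copies of the path `P₃` on three vertices. -/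
def kP3 (k : ℕ) : SimpleGraph (Fin k × Fin 3) where
  Adj x y := x.1 = y.1 ∧ (x.2.val + 1 = y.2.val ∨ y.2.val + 1 = x.2.val)
  symm := ⟨fun x y h => ⟨h.1.symm, h.2.symm⟩⟩
  loopless := ⟨fun x h => by omega⟩

/-- The linear forest `P_{a 0} ∪ P_{a 1} ∪ ⋯ ∪ P_{a (k-1)}`. -/
def linearForest (k : ℕ) (a : Fin k → ℕ) : SimpleGraph (Σ i : Fin k, Fin (a i)) where
  Adj x y := x.1 = y.1 ∧ (x.2.val + 1 = y.2.val ∨ y.2.val + 1 = x.2.val)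
  symm := ⟨fun x y h => ⟨h.1.symm, h.2.symm⟩⟩
  loopless := ⟨fun x h => by omega⟩

/-- `S_{n,h} = K_h ∇ complement (K_{n-h})`, the join of a clique on `h` vertices
with an independent set on `n - h` vertices. -/
def Snh (n h : ℕ) : SimpleGraph (Fin n) where
  Adj u v := u ≠ v ∧ (u.val < h ∨ v.val < h)
  symm := ⟨fun u v h => ⟨h.1.symm, h.2.symm⟩⟩
  loopless := ⟨fun u h => h.1 rfl⟩

/-- `S⁺_{n,h}` : `S_{n,h}` with one extra edge (between vertices `h` and `h+1`)
inside the independent part. -/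
def Spnh (n h : ℕ) : SimpleGraph (Fin n) where
  Adj u v := u ≠ v ∧ (u.val < h ∨ v.val < h ∨
    (u.val = h ∧ v.val = h + 1) ∨ (u.val = h + 1 ∧ v.val = h))
  symm := ⟨fun u v h => ⟨h.1.symm, by tauto⟩⟩
  loopless := ⟨fun u h => h.1 rfl⟩

/-- `N₆` : the graph obtained from the triangle `{0,1,2}` by attaching pendant
vertices `3,4,5` to `0,1,2` respectively. -/
def N6 : SimpleGraph (Fin 6) where
  Adj u v := u ≠ v ∧ ((u.val < 3 ∧ v.val < 3) ∨ v.val = u.val + 3 ∨ u.val = v.val + 3)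
  symm := ⟨fun u v h => ⟨h.1.symm, by tauto⟩⟩
  loopless := ⟨fun u h => by omega⟩

/-- `F_{n,k}(H) = K_{k-1} ∇ (H ∪ p·K₂ ∪ K_s)` for a graph `H` on `h` vertices,
where `n - (k + h - 1) = 2p + s`, `0 ≤ s < 2`.  Vertices `0,…,k-2` form the
dominating clique, `H` is placed on vertices `k-1,…,k-2+h`, and the remaining
vertices form a matching (plus one isolated vertex when `s = 1`). -/
def FnkH (n k h : ℕ) (H : SimpleGraph (Fin h)) : SimpleGraph (Fin n) where
  Adj u v := u ≠ v ∧ (u.val < k - 1 ∨ v.val < k - 1 ∨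
    (∃ (hu : u.val - (k - 1) < h) (hv : v.val - (k - 1) < h),
      k - 1 ≤ u.val ∧ k - 1 ≤ v.val ∧
        H.Adj ⟨u.val - (k - 1), hu⟩ ⟨v.val - (k - 1), hv⟩) ∨
    (k - 1 + h ≤ u.val ∧ (u.val - (k - 1 + h)) % 2 = 0 ∧ v.val = u.val + 1) ∨
    (k - 1 + h ≤ v.val ∧ (v.val - (k - 1 + h)) % 2 = 0 ∧ u.val = v.val + 1))
  symm := by
    refine ⟨?_⟩
    rintro u v ⟨hne, h⟩
    refine ⟨hne.symm, ?_⟩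
    rcases h with h | h | ⟨hu, hv, h1, h2, h3⟩ | h | h
    · tauto
    · tauto
    · exact Or.inr (Or.inr (Or.inl ⟨hv, hu, h2, h1, h3.symm⟩))
    · tauto
    · tauto
  loopless := by
    refine ⟨?_⟩
    rintro u ⟨hne, _⟩
    exact hne rfl

/-- `F_{n,k} = F_{n,k}(K₂) = K_{k-1} ∇ (p·K₂ ∪ K_s)`. -/
def Fnk (n k : ℕ) : SimpleGraph (Fin n) := FnkH n k 2 ⊤

/-- `H_{n,1}` : obtained from `S_{n-2,2}` (on vertices `0,…,n-3`, with dominating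
vertices `0,1`) and a triangle `{0, n-2, n-1}`, identifying the max-degree vertex
`0` of `S_{n-2,2}` with a vertex of `K₃`. -/
def Hn1 (n : ℕ) : SimpleGraph (Fin n) where
  Adj u v := u ≠ v ∧ ((u.val < n - 2 ∧ v.val < n - 2 ∧ (u.val < 2 ∨ v.val < 2)) ∨
    ((u.val = 0 ∨ n - 2 ≤ u.val) ∧ (v.val = 0 ∨ n - 2 ≤ v.val)))
  symm := ⟨fun u v h => ⟨h.1.symm, by tauto⟩⟩
  loopless := ⟨fun u h => h.1 rfl⟩

/-- `L_{t,h} = K₁ ∇ (t·K_h)` : one vertex joined to `t` disjoint copies of `K_h`. -/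
def Lth (t h : ℕ) : SimpleGraph (Fin (t * h + 1)) where
  Adj u v := u ≠ v ∧ (u.val = 0 ∨ v.val = 0 ∨ (u.val - 1) / h = (v.val - 1) / h)
  symm := ⟨fun u v h => ⟨h.1.symm, by tauto⟩⟩
  loopless := ⟨fun u h => h.1 rfl⟩

/-- `L_{t₁,t₂,h,h+1} = K₁ ∇ (t₁·K_h ∪ t₂·K_{h+1})`. -/
def Lt1t2 (t1 t2 h : ℕ) : SimpleGraph (Fin (t1 * h + t2 * (h + 1) + 1)) where
  Adj u v := u ≠ v ∧ (u.val = 0 ∨ v.val = 0 ∨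
    (u.val ≤ t1 * h ∧ v.val ≤ t1 * h ∧ (u.val - 1) / h = (v.val - 1) / h) ∨
    (t1 * h < u.val ∧ t1 * h < v.val ∧
      (u.val - 1 - t1 * h) / (h + 1) = (v.val - 1 - t1 * h) / (h + 1)))
  symm := ⟨fun u v h => ⟨h.1.symm, by tauto⟩⟩
  loopless := ⟨fun u h => h.1 rfl⟩


open scoped Classical
set_option linter.unusedSectionVars false
open Finset

namespace EGaux

variable {V : Type*} [Fintype V]

/-- Number of neighbours of `v` inside `s`. -/
noncomputable def Dg (G : SimpleGraph V) (s : Finset V) (v : V) : ℕ :=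
  (s.filter (G.Adj v)).card

/-- Twice the number of edges inside `s`. -/
noncomputable def E2 (G : SimpleGraph V) (s : Finset V) : ℕ :=
  ∑ v ∈ s, Dg G s v

/-- `f` enumerates a path on `m` vertices inside `s`. -/
def PathOn (G : SimpleGraph V) (s : Finset V) (m : ℕ) (f : ℕ → V) : Prop :=
  (∀ i, i < m → ∀ j, j < m → f i = f j → i = j) ∧ (∀ i, i < m → f i ∈ s) ∧
    (∀ i, i + 1 < m → G.Adj (f i) (f (i + 1)))

def PE (G : SimpleGraph V) (s : Finset V) (m : ℕ) : Prop :=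
  ∃ f : ℕ → V, PathOn G s m f

lemma pe_mono {G : SimpleGraph V} {s t : Finset V} {m : ℕ} (hst : s ⊆ t) (h : PE G s m) :
    PE G t m := by
  obtain ⟨f, h1, h2, h3⟩ := h
  exact ⟨f, h1, fun i hi => hst (h2 i hi), h3⟩

lemma pe_le {G : SimpleGraph V} {s : Finset V} {m k : ℕ} (hk : k ≤ m) (h : PE G s m) :
    PE G s k := by
  obtain ⟨f, h1, h2, h3⟩ := h
  exact ⟨f, fun i hi j hj => h1 i (lt_of_lt_of_le hi hk) j (lt_of_lt_of_le hj hk),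
    fun i hi => h2 i (lt_of_lt_of_le hi hk), fun i hi => h3 i (lt_of_lt_of_le hi hk)⟩

lemma pe_card_le {G : SimpleGraph V} {s : Finset V} {m : ℕ} (h : PE G s m) : m ≤ s.card := by
  obtain ⟨f, h1, h2, _⟩ := h
  have : ((Finset.range m).image f).card = m := by
    rw [Finset.card_image_of_injOn, Finset.card_range]
    intro i hi j hj hij
    exact h1 i (Finset.mem_range.mp hi) j (Finset.mem_range.mp hj) hij
  rw [← this]
  apply Finset.card_le_card
  intro w hw
  obtain ⟨i, hi, rfl⟩ := Finset.mem_image.mp hw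
  exact h2 i (Finset.mem_range.mp hi)

lemma dg_erase {G : SimpleGraph V} {s : Finset V} (v : V) :
    Dg G (s.erase v) v = Dg G s v := by
  unfold Dg
  congr 1
  ext w
  simp only [Finset.mem_filter, Finset.mem_erase]
  constructor
  · rintro ⟨⟨_, hw⟩, ha⟩; exact ⟨hw, ha⟩
  · rintro ⟨hw, ha⟩; exact ⟨⟨fun h => G.ne_of_adj ha h.symm, hw⟩, ha⟩

lemma E2_erase {G : SimpleGraph V} {s : Finset V} {v : V} (hv : v ∈ s) :
    E2 G s = E2 G (s.erase v) + 2 * Dg G s v := by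
  unfold E2
  rw [← Finset.sum_erase_add s _ hv]
  have hrow : ∀ u ∈ s.erase v, Dg G s u = Dg G (s.erase v) u + (if G.Adj u v then 1 else 0) := by
    intro u hu
    unfold Dg
    by_cases hadj : G.Adj u v
    · simp only [hadj, if_true]
      have : s.filter (G.Adj u) = insert v ((s.erase v).filter (G.Adj u)) := by
        ext w
        simp only [Finset.mem_filter, Finset.mem_insert, Finset.mem_erase]
        constructor
        · rintro ⟨hw, ha⟩
          by_cases hwv : w = v
          · exact Or.inl hwv
          · exact Or.inr ⟨⟨hwv, hw⟩, ha⟩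
        · rintro (rfl | ⟨⟨_, hw⟩, ha⟩)
          · exact ⟨hv, hadj⟩
          · exact ⟨hw, ha⟩
      rw [this, Finset.card_insert_of_notMem (by simp)]
    · simp only [hadj, if_false]
      congr 1
      ext w
      simp only [Finset.mem_filter, Finset.mem_erase]
      constructor
      · rintro ⟨hw, ha⟩
        exact ⟨⟨fun h => hadj (h ▸ ha), hw⟩, ha⟩
      · rintro ⟨⟨_, hw⟩, ha⟩; exact ⟨hw, ha⟩
  rw [Finset.sum_congr rfl hrow, Finset.sum_add_distrib]
  have hcol : ∑ x ∈ s.erase v, (if G.Adj x v then 1 else 0) = Dg G s v := by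
    rw [← dg_erase v]
    unfold Dg
    rw [Finset.card_filter]
    apply Finset.sum_congr rfl
    intro x _
    simp [G.adj_comm]
  rw [hcol]
  ring

end EGaux

namespace EGaux

variable {V : Type*} [Fintype V]

/-- prepend a new vertex adjacent to the front of a path -/
lemma pe_prepend {G : SimpleGraph V} {s : Finset V} {m : ℕ} {f : ℕ → V} {u : V}
    (hf : PathOn G s m f) (hu : u ∈ s) (hnew : ∀ i, i < m → f i ≠ u)
    (hadj : G.Adj u (f 0)) (hm : 0 < m) : PE G s (m + 1) := by
  obtain ⟨h1, h2, h3⟩ := hf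
  refine ⟨fun j => if j = 0 then u else f (j - 1), ?_, ?_, ?_⟩
  · intro i hi j hj hij
    by_cases hi0 : i = 0 <;> by_cases hj0 : j = 0
    · omega
    · simp only [hi0, if_pos rfl, if_neg hj0] at hij
      exact absurd hij.symm (hnew (j-1) (by omega))
    · simp only [hj0, if_pos rfl, if_neg hi0] at hij
      exact absurd hij (hnew (i-1) (by omega))
    · simp only [if_neg hi0, if_neg hj0] at hij
      have := h1 (i-1) (by omega) (j-1) (by omega) hij
      omega
  · intro i hi
    by_cases hi0 : i = 0
    · simpa [hi0] using hu
    · simp only [if_neg hi0]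
      exact h2 (i-1) (by omega)
  · intro i hi
    by_cases hi0 : i = 0
    · simpa [hi0] using hadj
    · simp only [if_neg hi0, Nat.add_sub_cancel]
      have : G.Adj (f (i-1)) (f (i-1+1)) := h3 (i-1) (by omega)
      have he : i - 1 + 1 = i := by omega
      rw [he] at this
      exact this

/-- A single edge inside `s` gives a path on two vertices. -/
lemma pe_two {G : SimpleGraph V} {s : Finset V} {v u : V} (hv : v ∈ s) (hu : u ∈ s)
    (hadj : G.Adj v u) : PE G s 2 := by
  refine ⟨fun j => if j = 0 then v else u, ?_, ?_, ?_⟩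
  · intro i hi j hj hij
    have hne := G.ne_of_adj hadj
    by_cases hi0 : i = 0 <;> by_cases hj0 : j = 0
    · omega
    · simp only [hi0, if_pos rfl, if_neg hj0] at hij; exact absurd hij hne
    · simp only [hj0, if_pos rfl, if_neg hi0] at hij; exact absurd hij.symm hne
    · omega
  · intro i hi
    by_cases hi0 : i = 0 <;> simp [hi0, hv, hu]
  · intro i hi
    have : i = 0 := by omega
    simpa [this] using hadj

end EGaux

namespace EGaux

variable {V : Type*} [Fintype V]

lemma pathOn_reverse {G : SimpleGraph V} {s : Finset V} {m : ℕ} {f : ℕ → V}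
    (hf : PathOn G s m f) : PathOn G s m (fun j => f (m - 1 - j)) := by
  obtain ⟨h1, h2, h3⟩ := hf
  refine ⟨?_, ?_, ?_⟩
  · intro a ha b hb hab
    have := h1 (m-1-a) (by omega) (m-1-b) (by omega) hab
    omega
  · intro a ha
    exact h2 (m-1-a) (by omega)
  · intro a ha
    have h' := h3 (m-1-(a+1)) (by omega)
    have e1 : m - 1 - (a+1) + 1 = m - 1 - a := by omega
    rw [e1] at h'
    exact h'.symm

lemma endpoint_nbrs {G : SimpleGraph V} {s : Finset V} {m : ℕ} {f : ℕ → V}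
    (hf : PathOn G s m f) (hm : 0 < m) (hmax : ∀ k, PE G s k → k ≤ m)
    {u : V} (hu : u ∈ s) (hadj : G.Adj (f 0) u) : ∃ k, k < m ∧ f k = u := by
  by_contra hcon
  push_neg at hcon
  have hpe : PE G s (m + 1) :=
    pe_prepend hf hu (fun i hi => hcon i hi) hadj.symm hm
  have := hmax _ hpe
  omega

private def sig (m i j : ℕ) : ℕ :=
  if j = 0 then 0 else if j ≤ m - 1 - i then i + j else m - j

lemma sig_lt {m i : ℕ} (hi : i + 1 < m) {j : ℕ} (hj : j < m) : sig m i j < m := by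
  unfold sig; split_ifs <;> (try contradiction) <;> omega

lemma sig_inj {m i : ℕ} (hi : i + 1 < m) {a b : ℕ} (ha : a < m) (hb : b < m)
    (hab : sig m i a = sig m i b) : a = b := by
  unfold sig at hab; split_ifs at hab <;> (try contradiction) <;> omega

lemma sig_surj {m i : ℕ} (hi : i + 1 < m) {k : ℕ} (hk : k < m) :
    ∃ j, j < m ∧ sig m i j = k := by
  refine ⟨if k = 0 then 0 else if i + 1 ≤ k then k - i else m - k, ?_, ?_⟩
  · split_ifs <;> (try contradiction) <;> omega
  · unfold sig; split_ifs <;> (try contradiction) <;> omega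

lemma cycle_core {G : SimpleGraph V} {s : Finset V} {m : ℕ} {f : ℕ → V}
    (hf : PathOn G s m f) (hm2 : 2 ≤ m) (hmax : ∀ k, PE G s k → k ≤ m)
    (hd : ∀ v ∈ s, m ≤ 2 * Dg G s v) :
    ∀ u ∈ s, ∀ k, k < m → G.Adj (f k) u → ∃ j, j < m ∧ f j = u := by
  obtain ⟨h1, h2, h3⟩ := hf
  have hf' : PathOn G s m f := ⟨h1, h2, h3⟩
  -- neighbours of the endpoints lie on the path
  have hN0 : ∀ u ∈ s, G.Adj (f 0) u → ∃ k, k < m ∧ f k = u := by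
    intro u hu hadj
    exact endpoint_nbrs hf' (by omega) hmax hu hadj
  have hNp : ∀ u ∈ s, G.Adj (f (m - 1)) u → ∃ k, k < m ∧ f k = u := by
    intro u hu hadj
    have hrev := pathOn_reverse hf'
    have h0 : (fun j => f (m - 1 - j)) 0 = f (m - 1) := by simp
    obtain ⟨k, hk, hfk⟩ := endpoint_nbrs hrev (by omega) hmax hu (by simpa using hadj)
    exact ⟨m - 1 - k, by omega, hfk⟩
  -- the crossing index i
  have hAcard : ((Finset.range (m-1)).filter (fun i => G.Adj (f 0) (f (i+1)))).card
      = Dg G s (f 0) := by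
    unfold Dg
    apply Finset.card_bij (fun i _ => f (i + 1))
    · intro a ha
      rw [Finset.mem_filter, Finset.mem_range] at ha
      exact Finset.mem_filter.mpr ⟨h2 (a+1) (by omega), ha.2⟩
    · intro a ha b hb hab
      rw [Finset.mem_filter, Finset.mem_range] at ha hb
      have := h1 (a+1) (by omega) (b+1) (by omega) hab
      omega
    · intro u hu
      rw [Finset.mem_filter] at hu
      obtain ⟨k, hk, hfk⟩ := hN0 u hu.1 hu.2
      have hk0 : k ≠ 0 := by
        intro h; rw [h] at hfk; exact G.ne_of_adj hu.2 hfk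
      have e : k - 1 + 1 = k := by omega
      refine ⟨k - 1, ?_, ?_⟩
      · rw [Finset.mem_filter, Finset.mem_range, e, hfk]
        exact ⟨by omega, hu.2⟩
      · rw [e]; exact hfk
  have hBcard : ((Finset.range (m-1)).filter (fun i => G.Adj (f (m-1)) (f i))).card
      = Dg G s (f (m-1)) := by
    unfold Dg
    apply Finset.card_bij (fun i _ => f i)
    · intro a ha
      rw [Finset.mem_filter, Finset.mem_range] at ha
      exact Finset.mem_filter.mpr ⟨h2 a (by omega), ha.2⟩
    · intro a ha b hb hab
      rw [Finset.mem_filter, Finset.mem_range] at ha hb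
      exact h1 a (by omega) b (by omega) hab
    · intro u hu
      rw [Finset.mem_filter] at hu
      obtain ⟨k, hk, hfk⟩ := hNp u hu.1 hu.2
      have hk0 : k ≠ m - 1 := by
        intro h; rw [h] at hfk
        exact (G.ne_of_adj hu.2) hfk
      refine ⟨k, ?_, hfk⟩
      rw [Finset.mem_filter, Finset.mem_range, hfk]
      exact ⟨by omega, hu.2⟩
  have hunion : (((Finset.range (m-1)).filter (fun i => G.Adj (f 0) (f (i+1)))) ∪
      ((Finset.range (m-1)).filter (fun i => G.Adj (f (m-1)) (f i)))).card ≤ m - 1 := by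
    have hsub : (((Finset.range (m-1)).filter (fun i => G.Adj (f 0) (f (i+1)))) ∪
        ((Finset.range (m-1)).filter (fun i => G.Adj (f (m-1)) (f i)))) ⊆
        Finset.range (m-1) :=
      Finset.union_subset (Finset.filter_subset _ _) (Finset.filter_subset _ _)
    calc _ ≤ (Finset.range (m-1)).card := Finset.card_le_card hsub
    _ = m - 1 := Finset.card_range _
  have h0s := hd (f 0) (h2 0 (by omega))
  have hps := hd (f (m-1)) (h2 (m-1) (by omega))
  have hcui := Finset.card_union_add_card_inter
    ((Finset.range (m-1)).filter (fun i => G.Adj (f 0) (f (i+1))))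
    ((Finset.range (m-1)).filter (fun i => G.Adj (f (m-1)) (f i)))
  have hinter : (((Finset.range (m-1)).filter (fun i => G.Adj (f 0) (f (i+1)))) ∩
      ((Finset.range (m-1)).filter (fun i => G.Adj (f (m-1)) (f i)))).Nonempty := by
    rw [← Finset.card_pos]
    omega
  obtain ⟨i, hiAB⟩ := hinter
  rw [Finset.mem_inter, Finset.mem_filter, Finset.mem_filter, Finset.mem_range] at hiAB
  obtain ⟨⟨hilt, hiA⟩, _, hiB⟩ := hiAB
  have hi : i + 1 < m := by omega
  -- the cycle function
  set c : ℕ → V := fun j => f (sig m i (j % m)) with hcdef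
  have hmpos : 0 < m := by omega
  have hc_mem : ∀ j, c j ∈ s := by
    intro j
    exact h2 _ (sig_lt hi (Nat.mod_lt _ hmpos))
  have hc_range : ∀ j, ∃ k, k < m ∧ f k = c j := by
    intro j
    exact ⟨sig m i (j % m), sig_lt hi (Nat.mod_lt _ hmpos), rfl⟩
  have hc_adj_aux : ∀ t, t < m → G.Adj (f (sig m i t)) (f (sig m i ((t+1) % m))) := by
    intro t ht
    by_cases c1 : t = 0
    · subst c1
      have em : (0+1) % m = 1 := Nat.mod_eq_of_lt (by omega)
      have e0 : sig m i 0 = 0 := by unfold sig; simp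
      have e1 : sig m i 1 = i + 1 := by unfold sig; split_ifs <;> (try contradiction) <;> omega
      rw [em, e0, e1]
      exact hiA
    · by_cases c2 : t + 1 ≤ m - 1 - i
      · have em : (t+1) % m = t + 1 := Nat.mod_eq_of_lt (by omega)
        have e1 : sig m i t = i + t := by unfold sig; split_ifs <;> (try contradiction) <;> omega
        have e2 : sig m i (t+1) = i + t + 1 := by unfold sig; split_ifs <;> (try contradiction) <;> omega
        rw [em, e1, e2]
        exact h3 (i+t) (by omega)
      · by_cases c3 : t ≤ m - 1 - i
        · -- t = m - 1 - i, sig t = m - 1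
          have e1 : sig m i t = m - 1 := by unfold sig; split_ifs <;> (try contradiction) <;> omega
          by_cases ci : i = 0
          · have etm : t = m - 1 := by omega
            have em : (t+1) % m = 0 := by rw [show t + 1 = m by omega, Nat.mod_self]
            have e2 : sig m i 0 = 0 := by unfold sig; simp
            rw [em, e1, e2]
            have : f i = f 0 := by rw [ci]
            rw [← this]
            exact hiB
          · have em : (t+1) % m = t + 1 := Nat.mod_eq_of_lt (by omega)
            have e2 : sig m i (t+1) = i := by unfold sig; split_ifs <;> (try contradiction) <;> omega
            rw [em, e1, e2]
            exact hiB
        · by_cases c4 : t = m - 1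
          · have em : (t+1) % m = 0 := by rw [show t + 1 = m by omega, Nat.mod_self]
            have e1 : sig m i t = 1 := by unfold sig; split_ifs <;> (try contradiction) <;> omega
            have e2 : sig m i 0 = 0 := by unfold sig; simp
            rw [em, e1, e2]
            exact (h3 0 (by omega)).symm
          · have em : (t+1) % m = t + 1 := Nat.mod_eq_of_lt (by omega)
            have e1 : sig m i t = m - t := by unfold sig; split_ifs <;> (try contradiction) <;> omega
            have e2 : sig m i (t+1) = m - t - 1 := by unfold sig; split_ifs <;> (try contradiction) <;> omega
            rw [em, e1, e2]
            have h' := h3 (m-t-1) (by omega)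
            rw [show m - t - 1 + 1 = m - t by omega] at h'
            exact h'.symm
  have hc_adj : ∀ j, G.Adj (c j) (c (j + 1)) := by
    intro j
    have e : (j + 1) % m = ((j % m) + 1) % m := by
      rw [Nat.add_mod j 1 m, Nat.add_mod (j % m) 1 m, Nat.mod_mod_of_dvd j (dvd_refl m)]
    show G.Adj (f (sig m i (j % m))) (f (sig m i ((j + 1) % m)))
    rw [e]
    exact hc_adj_aux (j % m) (Nat.mod_lt _ hmpos)
  -- conclusion
  intro u hu k hk hadj
  by_contra hcon
  push_neg at hcon
  obtain ⟨t, ht, hts⟩ := sig_surj hi hk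
  have hct : c t = f k := by
    show f (sig m i (t % m)) = f k
    rw [Nat.mod_eq_of_lt ht, hts]
  have hrot : PathOn G s m (fun j => c (t + j)) := by
    refine ⟨?_, fun a _ => hc_mem _, fun a ha => ?_⟩
    · intro a ha b hb hab
      have hab' : f (sig m i ((t + a) % m)) = f (sig m i ((t + b) % m)) := hab
      have h1' := h1 _ (sig_lt hi (Nat.mod_lt _ hmpos)) _ (sig_lt hi (Nat.mod_lt _ hmpos)) hab'
      have h2' := sig_inj hi (Nat.mod_lt _ hmpos) (Nat.mod_lt _ hmpos) h1'
      have h3' : a % m = b % m := Nat.ModEq.add_left_cancel' t h2'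
      rw [Nat.mod_eq_of_lt ha, Nat.mod_eq_of_lt hb] at h3'
      exact h3'
    · have h' := hc_adj (t + a)
      rw [show t + a + 1 = t + (a + 1) by omega] at h'
      exact h'
  have hnew : ∀ j, j < m → (fun j => c (t + j)) j ≠ u := by
    intro j _
    obtain ⟨k', hk', hfk'⟩ := hc_range (t + j)
    show c (t + j) ≠ u
    rw [← hfk']
    exact hcon k' hk'
  have hadj' : G.Adj u ((fun j => c (t + j)) 0) := by
    show G.Adj u (c (t + 0))
    rw [show t + 0 = t by omega, hct]
    exact hadj.symm
  have := hmax _ (pe_prepend hrot hu hnew hadj' (by omega))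
  omega

end EGaux

namespace EGaux

variable {V : Type*} [Fintype V]

lemma key (l : ℕ) (hl : 2 ≤ l) (G : SimpleGraph V) :
    ∀ n (s : Finset V), s.card ≤ n → (l - 2) * s.card < E2 G s → PE G s l := by
  intro n
  induction n with
  | zero =>
    intro s hs hE
    have : s = ∅ := Finset.card_eq_zero.mp (by omega)
    subst this
    simp [E2] at hE
  | succ n ih =>
    intro s hs hE
    by_cases hsmall : ∃ v ∈ s, 2 * Dg G s v ≤ l - 2
    · obtain ⟨v, hv, hdv⟩ := hsmall
      have he2 := E2_erase (G := G) hv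
      have hc : (s.erase v).card + 1 = s.card := Finset.card_erase_add_one hv
      have hlt : (l - 2) * (s.erase v).card < E2 G (s.erase v) := by
        have hexp : (l - 2) * s.card = (l - 2) * (s.erase v).card + (l - 2) := by
          rw [← hc]; ring
        omega
      exact pe_mono (Finset.erase_subset v s) (ih (s.erase v) (by omega) hlt)
    · push_neg at hsmall
      have hdeg : ∀ v ∈ s, l - 1 ≤ 2 * Dg G s v := by
        intro v hv; have := hsmall v hv; omega
      have hE2pos : 0 < E2 G s := by omega
      have hedge : ∃ v ∈ s, ∃ u ∈ s, G.Adj v u := by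
        by_contra hno
        push_neg at hno
        have hzero : E2 G s = 0 := by
          unfold E2 Dg
          apply Finset.sum_eq_zero
          intro v hv
          rw [Finset.card_eq_zero]
          ext u
          simp only [Finset.mem_filter, Finset.notMem_empty, iff_false, not_and]
          intro hu hadj
          exact (hno v hv u hu) hadj
        omega
      obtain ⟨v, hv, u, hu, hadj⟩ := hedge
      have hs2 : 2 ≤ s.card := Finset.one_lt_card.mpr ⟨v, hv, u, hu, G.ne_of_adj hadj⟩
      have hpe2 : PE G s 2 := pe_two hv hu hadj
      have hmax : ∀ k, PE G s k → k ≤ Nat.findGreatest (PE G s) s.card := fun k hk =>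
        Nat.le_findGreatest (pe_card_le hk) hk
      set m := Nat.findGreatest (PE G s) s.card with hmdef
      have hm2 : 2 ≤ m := hmax 2 hpe2
      have hPEm : PE G s m := Nat.findGreatest_spec (P := PE G s) hs2 hpe2
      have hms : m ≤ s.card := pe_card_le hPEm
      by_cases hlm : l ≤ m
      · exact pe_le hlm hPEm
      · push_neg at hlm
        obtain ⟨f, hf⟩ := hPEm
        have hd : ∀ w ∈ s, m ≤ 2 * Dg G s w := by
          intro w hw; have := hdeg w hw; omega
        have hcore := cycle_core hf hm2 hmax hd
        obtain ⟨h1, h2, h3⟩ := hf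
        have hCsub : (Finset.range m).image f ⊆ s := by
          intro w hw
          obtain ⟨k, hk, rfl⟩ := Finset.mem_image.mp hw
          exact h2 k (Finset.mem_range.mp hk)
        have hCcard : ((Finset.range m).image f).card = m := by
          rw [Finset.card_image_of_injOn, Finset.card_range]
          intro a ha b hb hab
          exact h1 a (Finset.mem_range.mp ha) b (Finset.mem_range.mp hb) hab
        have hCd : ∀ w ∈ (Finset.range m).image f, Dg G s w ≤ l - 2 := by
          intro w hw
          obtain ⟨k, hk, rfl⟩ := Finset.mem_image.mp hw
          rw [Finset.mem_range] at hk
          have hsub : s.filter (G.Adj (f k)) ⊆ ((Finset.range m).image f).erase (f k) := by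
            intro u' hu'
            rw [Finset.mem_filter] at hu'
            obtain ⟨j, hj, hfj⟩ := hcore u' hu'.1 k hk hu'.2
            rw [Finset.mem_erase]
            exact ⟨hfj ▸ (G.ne_of_adj hu'.2).symm,
              Finset.mem_image.mpr ⟨j, Finset.mem_range.mpr hj, hfj⟩⟩
          have := Finset.card_le_card hsub
          rw [Finset.card_erase_of_mem
            (Finset.mem_image.mpr ⟨k, Finset.mem_range.mpr hk, rfl⟩), hCcard] at this
          unfold Dg
          omega
        have hfilter : ∀ w ∈ s \ (Finset.range m).image f,
            s.filter (G.Adj w) = (s \ (Finset.range m).image f).filter (G.Adj w) := by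
          intro w hw
          rw [Finset.mem_sdiff] at hw
          ext u'
          simp only [Finset.mem_filter, Finset.mem_sdiff]
          constructor
          · rintro ⟨hu's, hadj'⟩
            refine ⟨⟨hu's, ?_⟩, hadj'⟩
            intro hu'C
            obtain ⟨k', hk', hfk'⟩ := Finset.mem_image.mp hu'C
            rw [Finset.mem_range] at hk'
            obtain ⟨j, hj, hfj⟩ := hcore w hw.1 k' hk' (by rw [hfk']; exact hadj'.symm)
            exact hw.2 (Finset.mem_image.mpr ⟨j, Finset.mem_range.mpr hj, hfj⟩)
          · rintro ⟨⟨hu's, _⟩, hadj'⟩; exact ⟨hu's, hadj'⟩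
        have hE2sd : E2 G (s \ (Finset.range m).image f)
            = ∑ w ∈ s \ (Finset.range m).image f, Dg G s w := by
          unfold E2
          apply Finset.sum_congr rfl
          intro w hw
          unfold Dg
          rw [hfilter w hw]
        have hsplit : ∑ w ∈ s \ (Finset.range m).image f, Dg G s w
            + ∑ w ∈ (Finset.range m).image f, Dg G s w = E2 G s :=
          Finset.sum_sdiff hCsub
        have hCsum : ∑ w ∈ (Finset.range m).image f, Dg G s w ≤ (l - 2) * m := by
          calc ∑ w ∈ (Finset.range m).image f, Dg G s w
              ≤ ((Finset.range m).image f).card * (l - 2) :=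
                Finset.sum_le_card_nsmul _ _ _ hCd
          _ = (l - 2) * m := by rw [hCcard]; ring
        have hcards : (s \ (Finset.range m).image f).card = s.card - m := by
          rw [Finset.card_sdiff_of_subset hCsub, hCcard]
        have hmul : (l - 2) * s.card = (l - 2) * (s.card - m) + (l - 2) * m := by
          rw [← Nat.mul_add, Nat.sub_add_cancel hms]
        have hlt : (l - 2) * (s \ (Finset.range m).image f).card
            < E2 G (s \ (Finset.range m).image f) := by
          rw [hcards, hE2sd]
          omega
        refine pe_mono (Finset.sdiff_subset) (ih _ ?_ hlt)
        have : 0 < ((Finset.range m).image f).card := by omega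
        omega

end EGaux


/-- Erdős–Gallai: if `e(G) > (l-2)·n/2` then `G` contains a path
of order `l`. -/
theorem stmt_2 (l : ℕ) (hl : 2 ≤ l) {V : Type*} [Fintype V] (G : SimpleGraph V)
    (he : (l - 2) * Fintype.card V < 2 * ecount G) :
    Contains G (SimpleGraph.pathGraph l) := by
  classical
  have hE2 : EGaux.E2 G Finset.univ = 2 * ecount G := by
    have h1 : EGaux.E2 G Finset.univ = ∑ v, G.degree v := by
      unfold EGaux.E2 EGaux.Dg
      apply Finset.sum_congr rfl
      intro v _
      have : Finset.univ.filter (G.Adj v) = G.neighborFinset v := by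
        ext w
        simp [SimpleGraph.mem_neighborFinset]
      rw [this, SimpleGraph.card_neighborFinset_eq_degree]
    have h2 : ∑ v, G.degree v = 2 * G.edgeFinset.card :=
      SimpleGraph.sum_degrees_eq_twice_card_edges G
    have h3 : ecount G = G.edgeFinset.card := by
      unfold ecount
      rw [← SimpleGraph.coe_edgeFinset, Set.ncard_coe_finset]
    rw [h1, h2, h3]
  have hcard : (Finset.univ : Finset V).card = Fintype.card V := Finset.card_univ
  have hpe : EGaux.PE G Finset.univ l := by
    apply EGaux.key l hl G (Fintype.card V) Finset.univ (le_of_eq hcard)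
    rw [hcard, hE2]
    exact he
  obtain ⟨f, h1, _, h3⟩ := hpe
  refine ⟨fun j => f j.val, ?_, ?_⟩
  · intro a b hab
    exact Fin.ext (h1 a.val a.isLt b.val b.isLt hab)
  · intro a b hab
    rw [SimpleGraph.pathGraph_adj] at hab
    rcases hab with h | h
    · have := h3 a.val (by omega)
      rw [h] at this
      exact this
    · have := h3 b.val (by omega)
      rw [h] at this
      exact this.symm
end

section
/- For k ≥ 2 and n ≥ 2k² with n − k + 1 even, the signless Laplacian spectral radius of F_{n,k} equals (n + 2k − 2 + sqrt((n+2k−6)² − 8(k²−4k+3)))/2; i.e., it is the largest root of x² − (n+2k−2)x + 2n + 2k² − 4k − 2 = 0. -/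
open scoped Classical

set_option linter.unnecessarySimpa false

lemma spec_iff_eig {n : ℕ} (M : Matrix (Fin n) (Fin n) ℝ) (lam : ℝ) :
    lam ∈ spectrum ℝ M ↔ ∃ w : Fin n → ℝ, w ≠ 0 ∧ M.mulVec w = lam • w := by
  rw [spectrum.mem_iff, Matrix.isUnit_iff_isUnit_det, isUnit_iff_ne_zero, not_not,
    ← Matrix.exists_mulVec_eq_zero_iff]
  constructor
  · rintro ⟨v, hv, h⟩
    refine ⟨v, hv, ?_⟩
    rw [Matrix.sub_mulVec] at h
    have : (algebraMap ℝ (Matrix (Fin n) (Fin n) ℝ) lam).mulVec v = lam • v := by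
      funext i
      rw [Matrix.algebraMap_eq_diagonal, Matrix.mulVec_diagonal]
      simp
    rw [this] at h
    funext i
    have := congrFun h i
    simp only [Pi.sub_apply, Pi.zero_apply, sub_eq_zero] at this
    simpa [Pi.smul_apply] using this.symm
  · rintro ⟨w, hw, h⟩
    refine ⟨w, hw, ?_⟩
    rw [Matrix.sub_mulVec, h]
    funext i
    simp only [Matrix.algebraMap_eq_diagonal, Matrix.mulVec_diagonal, Pi.algebraMap_apply,
      Algebra.algebraMap_self_apply, Pi.sub_apply, Pi.smul_apply, smul_eq_mul, Pi.zero_apply]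
    ring

lemma perron_bound {n : ℕ} (M : Matrix (Fin n) (Fin n) ℝ) (hM : ∀ i j, 0 ≤ M i j)
    (v : Fin n → ℝ) (hv : ∀ i, 0 < v i) (μ : ℝ) (hμv : M.mulVec v = μ • v)
    (w : Fin n → ℝ) (hw : w ≠ 0) (lam : ℝ) (hlw : M.mulVec w = lam • w) : lam ≤ μ := by
  have hne : (Finset.univ : Finset (Fin n)).Nonempty := by
    rcases Nat.eq_zero_or_pos n with h | h
    · exfalso; apply hw; funext i; exact absurd i.isLt (by omega)
    · exact ⟨⟨0, h⟩, Finset.mem_univ _⟩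
  obtain ⟨i, -, hi⟩ := Finset.exists_max_image Finset.univ (fun j => |w j| / v j) hne
  have hkey : ∀ j, |w j| ≤ (|w i| / v i) * v j := by
    intro j
    have := hi j (Finset.mem_univ j)
    calc |w j| = (|w j| / v j) * v j := by
          rw [div_mul_cancel₀ _ (ne_of_gt (hv j))]
    _ ≤ (|w i| / v i) * v j := by
        apply mul_le_mul_of_nonneg_right this (le_of_lt (hv j))
  have hwi : 0 < |w i| := by
    rcases Function.ne_iff.mp hw with ⟨j, hj⟩
    have h1 := hi j (Finset.mem_univ j)
    have h2 : 0 < |w j| / v j := div_pos (abs_pos.mpr hj) (hv j)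
    have h3 : 0 < |w i| / v i := lt_of_lt_of_le h2 h1
    by_contra hc
    push_neg at hc
    have : |w i| = 0 := le_antisymm hc (abs_nonneg _)
    rw [this] at h3
    simp at h3
  have hstep : |lam| * |w i| ≤ μ * |w i| := by
    have h1 : |lam * w i| = |(M.mulVec w) i| := by rw [hlw]; simp [mul_comm]
    have h2 : |(M.mulVec w) i| ≤ (|w i| / v i) * (μ * v i) := by
      rw [Matrix.mulVec, dotProduct]
      calc |∑ j, M i j * w j| ≤ ∑ j, |M i j * w j| := Finset.abs_sum_le_sum_abs _ _
      _ ≤ ∑ j, M i j * ((|w i| / v i) * v j) := by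
          apply Finset.sum_le_sum
          intro j _
          rw [abs_mul, abs_of_nonneg (hM i j)]
          exact mul_le_mul_of_nonneg_left (hkey j) (hM i j)
      _ = (|w i| / v i) * ∑ j, M i j * v j := by rw [Finset.mul_sum]; congr 1; funext j; ring
      _ = (|w i| / v i) * (μ * v i) := by
          congr 1
          have := congrFun hμv i
          simpa [Matrix.mulVec, dotProduct] using this
    have h3 : (|w i| / v i) * (μ * v i) = μ * |w i| := by
      rw [div_mul_eq_mul_div, div_eq_iff (ne_of_gt (hv i))]
      ring
    calc |lam| * |w i| = |lam * w i| := (abs_mul _ _).symm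
    _ ≤ μ * |w i| := by rw [h1] at *; rw [← h3]; exact h2
  have : |lam| ≤ μ := le_of_mul_le_mul_right hstep hwi
  exact le_trans (le_abs_self lam) this

lemma card_filter_val_lt (n m : ℕ) (h : m ≤ n) :
    (Finset.univ.filter (fun j : Fin n => (j : ℕ) < m)).card = m := by
  have : (Finset.univ.filter (fun j : Fin n => (j : ℕ) < m)) =
      Finset.map (Fin.castLEEmb h) Finset.univ := by
    ext j
    simp only [Finset.mem_filter, Finset.mem_univ, true_and, Finset.mem_map]
    constructor
    · intro hj; exact ⟨⟨j.val, hj⟩, rfl⟩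
    · rintro ⟨a, rfl⟩; simpa using a.isLt
  rw [this, Finset.card_map, Finset.card_univ, Fintype.card_fin]


section FnkFacts

variable {n k : ℕ}

lemma fnk_adj_iff (hk : 2 ≤ k) (u v : Fin n) :
    (Fnk n k).Adj u v ↔ u.val ≠ v.val ∧ (u.val < k - 1 ∨ v.val < k - 1 ∨
      (k - 1 ≤ u.val ∧ u.val ≤ k ∧ k - 1 ≤ v.val ∧ v.val ≤ k) ∨
      (k + 1 ≤ u.val ∧ (u.val - (k + 1)) % 2 = 0 ∧ v.val = u.val + 1) ∨
      (k + 1 ≤ v.val ∧ (v.val - (k + 1)) % 2 = 0 ∧ u.val = v.val + 1)) := by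
  show (_ ≠ _ ∧ _) ↔ _
  rw [Ne, Fin.ext_iff]
  constructor
  · rintro ⟨hne, hc⟩
    refine ⟨hne, ?_⟩
    rcases hc with h | h | ⟨hu, hv, h1, h2, -⟩ | h | h
    · exact Or.inl h
    · exact Or.inr (Or.inl h)
    · exact Or.inr (Or.inr (Or.inl (by omega)))
    · exact Or.inr (Or.inr (Or.inr (Or.inl (by omega))))
    · exact Or.inr (Or.inr (Or.inr (Or.inr (by omega))))
  · rintro ⟨hne, hc⟩
    refine ⟨hne, ?_⟩
    rcases hc with h | h | ⟨h1, h2, h3, h4⟩ | h | h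
    · exact Or.inl h
    · exact Or.inr (Or.inl h)
    · by_cases huv : u.val < k - 1
      · exact Or.inl huv
      · refine Or.inr (Or.inr (Or.inl ⟨by omega, by omega, h1, h3, ?_⟩))
        rw [SimpleGraph.top_adj]
        intro hcon
        rw [Fin.ext_iff] at hcon
        simp only at hcon
        omega
    · exact Or.inr (Or.inr (Or.inr (Or.inl (by omega))))
    · exact Or.inr (Or.inr (Or.inr (Or.inr (by omega))))

end FnkFacts

section FnkFacts2

variable {n k : ℕ}

lemma clique_nbhd (hk : 2 ≤ k) (i : Fin n) (hi : i.val < k - 1) :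
    (Fnk n k).neighborFinset i = Finset.univ.erase i := by
  ext j
  rw [SimpleGraph.mem_neighborFinset, fnk_adj_iff hk, Finset.mem_erase]
  constructor
  · rintro ⟨hne, -⟩
    exact ⟨by rw [Ne, Fin.ext_iff]; omega, Finset.mem_univ _⟩
  · rintro ⟨hne, -⟩
    rw [Ne, Fin.ext_iff] at hne
    exact ⟨by omega, Or.inl hi⟩

lemma rest_nbhd (hk : 2 ≤ k) (hkn : k + 2 ≤ n) (hpar : (n - k) % 2 = 1)
    (i : Fin n) (hi : k - 1 ≤ i.val) :
    ∃ p : Fin n, k - 1 ≤ p.val ∧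
      (Fnk n k).neighborFinset i =
        insert p (Finset.univ.filter (fun j : Fin n => j.val < k - 1)) := by
  have hin : i.val < n := i.isLt
  have hpval : (if (i.val - (k-1)) % 2 = 0 then i.val + 1 else i.val - 1) < n := by
    split_ifs with h
    · omega
    · omega
  refine ⟨⟨_, hpval⟩, ?_, ?_⟩
  · simp only
    split_ifs with h <;> omega
  · ext j
    have hjn : j.val < n := j.isLt
    rw [SimpleGraph.mem_neighborFinset, fnk_adj_iff hk, Finset.mem_insert, Finset.mem_filter,
      Fin.ext_iff]
    simp only [Finset.mem_univ, true_and]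
    by_cases h : (i.val - (k-1)) % 2 = 0
    · rw [if_pos h]
      omega
    · rw [if_neg h]
      omega

lemma clique_degree (hk : 2 ≤ k) (i : Fin n) (hi : i.val < k - 1) :
    (Fnk n k).degree i = n - 1 := by
  rw [SimpleGraph.degree, clique_nbhd hk i hi, Finset.card_erase_of_mem (Finset.mem_univ _),
    Finset.card_univ, Fintype.card_fin]

lemma rest_degree (hk : 2 ≤ k) (hkn : k + 2 ≤ n) (hpar : (n - k) % 2 = 1)
    (i : Fin n) (hi : k - 1 ≤ i.val) :
    (Fnk n k).degree i = k := by
  obtain ⟨p, hp, hN⟩ := rest_nbhd hk hkn hpar i hi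
  rw [SimpleGraph.degree, hN, Finset.card_insert_of_notMem, card_filter_val_lt n (k-1) (by omega)]
  · omega
  · rw [Finset.mem_filter]
    rintro ⟨-, hc⟩
    omega

lemma sum_filter_x (a b : ℝ) (m : ℕ) (hm : m ≤ n) :
    ∑ j ∈ Finset.univ.filter (fun j : Fin n => j.val < m),
      (if j.val < m then a else b) = m * a := by
  rw [Finset.sum_congr rfl (fun j hj => if_pos (Finset.mem_filter.mp hj).2),
    Finset.sum_const, card_filter_val_lt n m hm, nsmul_eq_mul]

lemma sum_univ_x (a b : ℝ) (m : ℕ) (hm : m ≤ n) :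
    ∑ j : Fin n, (if j.val < m then a else b) = m * a + (n - m : ℕ) * b := by
  rw [← Finset.sum_filter_add_sum_filter_not Finset.univ (fun j : Fin n => j.val < m)]
  congr 1
  · exact sum_filter_x a b m hm
  · rw [Finset.sum_congr rfl (fun j hj => if_neg (Finset.mem_filter.mp hj).2),
      Finset.sum_const, nsmul_eq_mul]
    have h2 : (Finset.univ.filter (fun j : Fin n => ¬ j.val < m)).card = n - m := by
      have := Finset.card_filter_add_card_filter_not (s := (Finset.univ : Finset (Fin n)))
        (p := fun j : Fin n => j.val < m)
      rw [card_filter_val_lt n m hm, Finset.card_univ, Fintype.card_fin] at this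
      omega
    rw [h2]

end FnkFacts2

section Eigen

variable {n k : ℕ}

lemma qmat_mulVec_apply {V : Type*} [Fintype V] [DecidableEq V] (G : SimpleGraph V)
    (x : V → ℝ) (i : V) :
    (Qmat G).mulVec x i = (G.degree i : ℝ) * x i + ∑ j ∈ G.neighborFinset i, x j := by
  rw [Qmat, Matrix.add_mulVec, Pi.add_apply, Matrix.mulVec_diagonal,
    SimpleGraph.adjMatrix_mulVec_apply]

lemma fnk_eigen (hk : 2 ≤ k) (hkn : k + 2 ≤ n) (hpar : (n - k) % 2 = 1)
    (a b μ : ℝ)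
    (hrow1 : ((n-1:ℕ):ℝ) * a + (((k-1:ℕ):ℝ) * a + ((n-(k-1):ℕ):ℝ) * b - a) = μ * a)
    (hrow2 : ((k:ℕ):ℝ) * b + (((k-1:ℕ):ℝ) * a + b) = μ * b) :
    (Qmat (Fnk n k)).mulVec (fun j : Fin n => if j.val < k - 1 then a else b) =
      μ • (fun j : Fin n => if j.val < k - 1 then a else b) := by
  funext i
  rw [qmat_mulVec_apply, Pi.smul_apply, smul_eq_mul]
  by_cases hi : i.val < k - 1
  · rw [clique_degree hk i hi, clique_nbhd hk i hi,
      Finset.sum_erase_eq_sub (Finset.mem_univ i),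
      sum_univ_x a b (k-1) (by omega), if_pos hi]
    exact hrow1
  · push_neg at hi
    obtain ⟨p, hp, hN⟩ := rest_nbhd hk hkn hpar i hi
    rw [rest_degree hk hkn hpar i hi, hN, Finset.sum_insert (by
        rw [Finset.mem_filter]; rintro ⟨-, hc⟩; omega),
      sum_filter_x a b (k-1) (by omega), if_neg (by omega), if_neg (by omega)]
    linarith [hrow2]

lemma qmat_nonneg {V : Type*} [Fintype V] [DecidableEq V] (G : SimpleGraph V) (i j : V) :
    0 ≤ Qmat G i j := by
  rw [Qmat, Matrix.add_apply, Matrix.diagonal_apply]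
  have h1 : (0:ℝ) ≤ G.adjMatrix ℝ i j := by
    rw [SimpleGraph.adjMatrix_apply]
    split_ifs <;> norm_num
  split_ifs with h
  · have : (0:ℝ) ≤ (G.degree j : ℝ) := Nat.cast_nonneg _
    subst h
    linarith
  · linarith

end Eigen

/-- exact value of `q(F_{n,k})` when `n - k + 1` is even. -/
theorem stmt_6 (k n : ℕ) (hk : 2 ≤ k) (hn : 2 * k ^ 2 ≤ n) (hpar : Even (n - k + 1)) :
    qspec (Fnk n k) =
      ((n : ℝ) + 2 * k - 2 +
        Real.sqrt (((n : ℝ) + 2 * k - 6) ^ 2 - 8 * ((k : ℝ) ^ 2 - 4 * k + 3))) / 2 := by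
  -- Natural number facts
  have hkk : 2 * k ≤ 2 * k ^ 2 := by nlinarith
  have hkn : k + 2 ≤ n := by omega
  have hn8 : 8 ≤ n := by nlinarith
  have hpar' : (n - k) % 2 = 1 := by
    rw [Nat.even_iff] at hpar; omega
  -- Real abbreviations
  have hKr' : (2:ℝ) ≤ (k:ℝ) := by exact_mod_cast hk
  have hNr' : 2 * (k:ℝ) ^ 2 ≤ (n:ℝ) := by exact_mod_cast hn
  have hN8' : (8:ℝ) ≤ (n:ℝ) := by exact_mod_cast hn8
  set N : ℝ := (n : ℝ) with hNdef
  set K : ℝ := (k : ℝ) with hKdef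
  have hKr : (2:ℝ) ≤ K := hKr'
  have hNr : 2 * K ^ 2 ≤ N := hNr'
  have hN8 : (8:ℝ) ≤ N := hN8'
  set D : ℝ := (N + 2 * K - 6) ^ 2 - 8 * (K ^ 2 - 4 * K + 3) with hDdef
  have h6 : (6:ℝ) ≤ N + 2 * K - 6 := by nlinarith
  have hD : 0 ≤ D := by nlinarith [sq_nonneg (N + 2*K - 12), sq_nonneg (K - 2)]
  set s : ℝ := Real.sqrt D with hsdef
  have hs0 : 0 ≤ s := Real.sqrt_nonneg _
  have hs2 : s ^ 2 = D := Real.sq_sqrt hD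
  set μ : ℝ := (N + 2 * K - 2 + s) / 2 with hμdef
  have hquad : μ ^ 2 = (N + 2*K - 2) * μ - (2*N + 2*K^2 - 4*K - 2) := by
    have h1 : 2 * μ - (N + 2*K - 2) = s := by rw [hμdef]; ring
    have h2 : (2 * μ - (N + 2*K - 2)) ^ 2 = D := by rw [h1]; exact hs2
    linear_combination h2 / 4
  have hμK : K + 1 < μ := by
    rw [hμdef]; linarith [hs0, hN8]
  have hK1 : (0:ℝ) < K - 1 := by linarith
  set a : ℝ := (μ - (K + 1)) / (K - 1) with hadef
  have ha : 0 < a := div_pos (by linarith) hK1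
  -- cast lemmas
  have hc1 : ((n-1:ℕ):ℝ) = N - 1 := by rw [Nat.cast_sub (by omega)]; norm_num [hNdef]
  have hc2 : ((k-1:ℕ):ℝ) = K - 1 := by rw [Nat.cast_sub (by omega)]; norm_num [hKdef]
  have hc3 : ((n-(k-1):ℕ):ℝ) = N - (K - 1) := by
    rw [Nat.cast_sub (by omega), hc2]
  -- the two row equations
  have hrow1 : ((n-1:ℕ):ℝ) * a + (((k-1:ℕ):ℝ) * a + ((n-(k-1):ℕ):ℝ) * 1 - a) = μ * a := by
    have key : (μ - (N+K-3)) * (μ - (K+1)) = (N-K+1)*(K-1) := by linear_combination hquad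
    rw [hc1, hc2, hc3, hadef]
    field_simp
    linear_combination key - hs2 / 2
  have hrow2 : ((k:ℕ):ℝ) * 1 + (((k-1:ℕ):ℝ) * a + 1) = μ * 1 := by
    rw [hc2, hadef, mul_div_cancel₀ _ (ne_of_gt hK1)]
    ring
  have heig := fnk_eigen hk hkn hpar' a 1 μ hrow1 hrow2
  set x : Fin n → ℝ := fun j : Fin n => if j.val < k - 1 then a else 1 with hxdef
  have hxpos : ∀ i, 0 < x i := by
    intro i; rw [hxdef]; dsimp only; split_ifs; exact ha; norm_num
  have hxne : x ≠ 0 := by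
    intro h
    have h2 := congrFun h ⟨n-1, by omega⟩
    rw [hxdef] at h2
    simp only [Pi.zero_apply] at h2
    rw [if_neg (by simp; omega)] at h2
    norm_num at h2
  have hmem : μ ∈ spectrum ℝ (Qmat (Fnk n k)) := (spec_iff_eig _ _).mpr ⟨x, hxne, heig⟩
  have hub : ∀ lam ∈ spectrum ℝ (Qmat (Fnk n k)), lam ≤ μ := by
    intro lam hlam
    obtain ⟨w, hw, hww⟩ := (spec_iff_eig _ _).mp hlam
    exact perron_bound _ (qmat_nonneg _) x hxpos μ heig w hw lam hww
  have : qspec (Fnk n k) = μ := by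
    rw [qspec]
    apply le_antisymm
    · exact csSup_le ⟨μ, hmem⟩ hub
    · exact le_csSup ⟨μ, fun lam hlam => hub lam hlam⟩ hmem
  rw [this, hμdef, hsdef, hDdef]
end

section
/- For n ≥ 28, the signless Laplacian spectral radius of H_{n,1} is strictly less than that of S_{n,2}: q(H_{n,1}) < q(S_{n,2}). -/
open scoped Classical

/-! ### General spectral lemmas -/

lemma spec_exists_eigvec {n : Type*} [Fintype n] [DecidableEq n]
    (M : Matrix n n ℝ) {μ : ℝ} (hμ : μ ∈ spectrum ℝ M) :
    ∃ x : n → ℝ, x ≠ 0 ∧ M.mulVec x = μ • x := by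
  rw [← AlgEquiv.spectrum_eq (Matrix.toLinAlgEquiv' (n := n) (R := ℝ)),
    ← Module.End.hasEigenvalue_iff_mem_spectrum] at hμ
  obtain ⟨x, hx⟩ := hμ.exists_hasEigenvector
  exact ⟨x, hx.2, by simpa [Matrix.toLinAlgEquiv'_apply] using hx.apply_eq_smul⟩

lemma mem_spectrum_of_eigvec {n : Type*} [Fintype n] [DecidableEq n]
    (M : Matrix n n ℝ) {μ : ℝ} {x : n → ℝ} (hx : x ≠ 0) (h : M.mulVec x = μ • x) :
    μ ∈ spectrum ℝ M := by
  rw [← AlgEquiv.spectrum_eq (Matrix.toLinAlgEquiv' (n := n) (R := ℝ))]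
  refine Module.End.HasEigenvalue.mem_spectrum (μ := μ) ?_
  exact Module.End.hasEigenvalue_of_hasEigenvector
    ⟨Module.End.mem_eigenspace_iff.mpr (by simpa [Matrix.toLinAlgEquiv'_apply] using h), hx⟩

lemma spec_le_of_rowsum {n : Type*} [Fintype n] [DecidableEq n]
    (M : Matrix n n ℝ) (hM : ∀ i j, 0 ≤ M i j) (s : n → ℝ) (hs : ∀ i, 0 < s i)
    (C : ℝ) (hC : 0 ≤ C) (hrow : ∀ i, ∑ j, M i j * s j ≤ C * s i)
    {μ : ℝ} (hμ : μ ∈ spectrum ℝ M) : μ ≤ C := by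
  rcases le_or_gt μ 0 with h | hpos
  · linarith
  obtain ⟨x, hx0, hxe⟩ := spec_exists_eigvec M hμ
  obtain ⟨i₀, hi₀⟩ : ∃ i, x i ≠ 0 := Function.ne_iff.mp hx0
  obtain ⟨v, -, hv⟩ := Finset.exists_max_image Finset.univ (fun i => |x i| / s i)
    ⟨i₀, Finset.mem_univ _⟩
  have hxv : 0 < |x v| := by
    have h1 : 0 < |x i₀| / s i₀ := div_pos (abs_pos.mpr hi₀) (hs i₀)
    by_contra h
    push_neg at h
    have : |x v| = 0 := le_antisymm h (abs_nonneg _)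
    rw [this, zero_div] at hv
    linarith [hv i₀ (Finset.mem_univ i₀)]
  have key : μ * |x v| ≤ C * |x v| := by
    have h1 : μ * x v = ∑ j, M v j * x j := by
      have := congrFun hxe v
      simpa [Matrix.mulVec, dotProduct, Pi.smul_apply, smul_eq_mul,
        mul_comm] using this.symm
    calc μ * |x v| = |μ * x v| := by rw [abs_mul, abs_of_pos hpos]
      _ = |∑ j, M v j * x j| := by rw [h1]
      _ ≤ ∑ j, |M v j * x j| := Finset.abs_sum_le_sum_abs _ _
      _ = ∑ j, M v j * |x j| := by
          refine Finset.sum_congr rfl fun j _ => ?_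
          rw [abs_mul, abs_of_nonneg (hM v j)]
      _ ≤ ∑ j, M v j * (s j * (|x v| / s v)) := by
          refine Finset.sum_le_sum fun j _ => ?_
          refine mul_le_mul_of_nonneg_left ?_ (hM v j)
          have := hv j (Finset.mem_univ j)
          calc |x j| = s j * (|x j| / s j) := by
                rw [mul_div_cancel₀ _ (ne_of_gt (hs j))]
            _ ≤ s j * (|x v| / s v) :=
              mul_le_mul_of_nonneg_left this (le_of_lt (hs j))
      _ = (∑ j, M v j * s j) * (|x v| / s v) := by
          rw [Finset.sum_mul]; exact Finset.sum_congr rfl fun j _ => by ring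
      _ ≤ (C * s v) * (|x v| / s v) := by
          refine mul_le_mul_of_nonneg_right (hrow v) ?_
          exact div_nonneg (abs_nonneg _) (le_of_lt (hs v))
      _ = C * |x v| := by
          rw [mul_comm C (s v), mul_assoc, mul_comm (s v), mul_assoc,
            div_mul_cancel₀ _ (ne_of_gt (hs v)), mul_comm]
  exact le_of_mul_le_mul_right key hxv

/-! ### Qmat row computations -/

lemma Qmat_mulVec_apply {n : ℕ} (G : SimpleGraph (Fin n)) (x : Fin n → ℝ) (v : Fin n) :
    (Qmat G).mulVec x v = (G.degree v : ℝ) * x v + ∑ u ∈ G.neighborFinset v, x u := by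
  simp [Qmat, Matrix.add_mulVec, Matrix.mulVec_diagonal,
    SimpleGraph.adjMatrix_mulVec_apply]

lemma Qmat_rowsum {n : ℕ} (G : SimpleGraph (Fin n)) (s : Fin n → ℝ) (v : Fin n) :
    ∑ j, Qmat G v j * s j = (G.degree v : ℝ) * s v + ∑ u ∈ G.neighborFinset v, s u := by
  rw [← Qmat_mulVec_apply]
  simp [Matrix.mulVec, dotProduct]

lemma Qmat_nonneg {n : ℕ} (G : SimpleGraph (Fin n)) (i j : Fin n) : 0 ≤ Qmat G i j := by
  simp only [Qmat, Matrix.add_apply, Matrix.diagonal_apply, SimpleGraph.adjMatrix_apply]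
  split_ifs <;> positivity

lemma neighborFinset_eq {n : ℕ} (G : SimpleGraph (Fin n)) (v : Fin n)
    (p : ℕ → Prop) [DecidablePred p] (h : ∀ u : Fin n, G.Adj v u ↔ p u.val) :
    G.neighborFinset v = Finset.univ.filter (fun u : Fin n => p u.val) := by
  ext u
  simp [SimpleGraph.mem_neighborFinset, h]

lemma neighbor_sum {n : ℕ} (G : SimpleGraph (Fin n)) (v : Fin n)
    (p : ℕ → Prop) [DecidablePred p] (h : ∀ u : Fin n, G.Adj v u ↔ p u.val) (g : ℕ → ℝ) :
    ∑ u ∈ G.neighborFinset v, g u.val = ∑ i ∈ Finset.range n, if p i then g i else 0 := by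
  rw [neighborFinset_eq G v p h, Finset.sum_filter]
  exact Fin.sum_univ_eq_sum_range (fun i => if p i then g i else 0) n

lemma neighbor_card {n : ℕ} (G : SimpleGraph (Fin n)) (v : Fin n)
    (p : ℕ → Prop) [DecidablePred p] (h : ∀ u : Fin n, G.Adj v u ↔ p u.val) :
    G.degree v = ((Finset.range n).filter p).card := by
  rw [← SimpleGraph.card_neighborFinset_eq_degree, neighborFinset_eq G v p h,
    Finset.card_filter, Finset.card_filter]
  exact Fin.sum_univ_eq_sum_range (fun i => if p i then 1 else 0) n

/-- Evaluation of weighted sums over `range n` with weight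
`A` at `0`, `B` at `1`, `c` elsewhere. -/
lemma sum_weight {n : ℕ} (hn : 2 ≤ n) (p : ℕ → Prop) [DecidablePred p] (A B c : ℝ) :
    ∑ i ∈ Finset.range n, (if p i then (if i = 0 then A else if i = 1 then B else c) else 0)
      = c * ((Finset.range n).filter p).card
        + (if p 0 then A - c else 0) + (if p 1 then B - c else 0) := by
  have key : ∀ i, (if p i then (if i = 0 then A else if i = 1 then B else c) else 0)
      = (if p i then c else 0)
        + (if i = 0 then (if p i then A - c else 0) else 0)
        + (if i = 1 then (if p i then B - c else 0) else 0) := by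
    intro i
    rcases eq_or_ne i 0 with rfl | h0
    · simp; split_ifs <;> ring
    rcases eq_or_ne i 1 with rfl | h1
    · simp [h0]; split_ifs <;> ring
    · simp [h0, h1]
  simp only [key]
  rw [Finset.sum_add_distrib, Finset.sum_add_distrib]
  congr 1
  · congr 1
    · rw [← Finset.sum_filter, Finset.sum_const, nsmul_eq_mul, mul_comm]
    · rw [Finset.sum_ite_eq' (Finset.range n) 0 (fun i => if p i then A - c else 0)]
      simp [Finset.mem_range]; omega
  · rw [Finset.sum_ite_eq' (Finset.range n) 1 (fun i => if p i then B - c else 0)]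
    simp [Finset.mem_range]; omega

/-! ### cardinality facts -/

lemma card_ne {n k : ℕ} (hk : k < n) :
    ((Finset.range n).filter (fun i => i ≠ k)).card = n - 1 := by
  rw [Finset.filter_ne', Finset.card_erase_of_mem (Finset.mem_range.mpr hk), Finset.card_range]

lemma card_lt2 {n : ℕ} (hn : 2 ≤ n) :
    ((Finset.range n).filter (fun i => i < 2)).card = 2 := by
  have : (Finset.range n).filter (fun i => i < 2) = Finset.range 2 := by
    ext i; simp [Finset.mem_filter, Finset.mem_range]; omega
  rw [this, Finset.card_range]

lemma card_h1 {n : ℕ} (hn : 28 ≤ n) :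
    ((Finset.range n).filter (fun i => i ≠ 1 ∧ i < n - 2)).card = n - 3 := by
  have : (Finset.range n).filter (fun i => i ≠ 1 ∧ i < n - 2)
      = (Finset.range (n - 2)).erase 1 := by
    ext i; simp [Finset.mem_filter, Finset.mem_range, Finset.mem_erase]; omega
  rw [this, Finset.card_erase_of_mem (Finset.mem_range.mpr (by omega)), Finset.card_range]
  omega

lemma card_hend {n v : ℕ} (hn : 28 ≤ n) (hv : n - 2 ≤ v) (hv' : v < n) :
    ((Finset.range n).filter (fun i => i ≠ v ∧ (i = 0 ∨ n - 2 ≤ i))).card = 2 := by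
  rcases (by omega : v = n - 2 ∨ v = n - 1) with rfl | rfl
  · have : (Finset.range n).filter (fun i => i ≠ n - 2 ∧ (i = 0 ∨ n - 2 ≤ i))
        = {0, n - 1} := by
      ext i; simp [Finset.mem_filter, Finset.mem_range, Finset.mem_insert]; omega
    rw [this, Finset.card_pair (by omega)]
  · have : (Finset.range n).filter (fun i => i ≠ n - 1 ∧ (i = 0 ∨ n - 2 ≤ i))
        = {0, n - 2} := by
      ext i; simp [Finset.mem_filter, Finset.mem_range, Finset.mem_insert]; omega
    rw [this, Finset.card_pair (by omega)]

/-! ### Adjacency characterizations -/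

lemma hn1_adj {n : ℕ} (v u : Fin n) :
    (Hn1 n).Adj v u ↔ (v.val ≠ u.val ∧
      ((v.val < n - 2 ∧ u.val < n - 2 ∧ (v.val < 2 ∨ u.val < 2)) ∨
        ((v.val = 0 ∨ n - 2 ≤ v.val) ∧ (u.val = 0 ∨ n - 2 ≤ u.val)))) := by
  simp only [Hn1]
  constructor
  · rintro ⟨h1, h2⟩
    exact ⟨fun h => h1 (Fin.ext h), h2⟩
  · rintro ⟨h1, h2⟩
    exact ⟨fun h => h1 (by rw [h]), h2⟩

lemma snh_adj {n : ℕ} (v u : Fin n) :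
    (Snh n 2).Adj v u ↔ (v.val ≠ u.val ∧ (v.val < 2 ∨ u.val < 2)) := by
  simp only [Snh]
  constructor
  · rintro ⟨h1, h2⟩
    exact ⟨fun h => h1 (Fin.ext h), h2⟩
  · rintro ⟨h1, h2⟩
    exact ⟨fun h => h1 (by rw [h]), h2⟩

/-! ### Upper bound for `Hn1` -/

lemma hn1_upper {n : ℕ} (hn : 28 ≤ n) :
    qspec (Hn1 n) ≤ ((n : ℝ) ^ 2 + n - 6) / ((n : ℝ) - 1) := by
  set N : ℝ := (n : ℝ) with hNdef
  have hN : (28 : ℝ) ≤ N := by rw [hNdef]; exact_mod_cast hn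
  set C : ℝ := (N ^ 2 + N - 6) / (N - 1) with hCdef
  have hC : 0 ≤ C := by
    apply div_nonneg <;> nlinarith
  set g : ℕ → ℝ := fun i => if i = 0 then N - 1 else if i = 1 then N - 3 else 2 with hgdef
  set s : Fin n → ℝ := fun v => g v.val with hsdef
  have hs : ∀ v : Fin n, 0 < s v := by
    intro v
    simp only [hsdef, hgdef]
    split_ifs <;> nlinarith
  have hc1 : ((n - 1 : ℕ) : ℝ) = N - 1 := by
    rw [Nat.cast_sub (by omega)]; norm_num; exact hNdef.symm
  have hc3 : ((n - 3 : ℕ) : ℝ) = N - 3 := by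
    rw [Nat.cast_sub (by omega)]; norm_num; exact hNdef.symm
  have hrow : ∀ v : Fin n, ∑ j, Qmat (Hn1 n) v j * s j ≤ C * s v := by
    intro v
    rw [Qmat_rowsum]
    have hvlt := v.isLt
    rcases (by omega : v.val = 0 ∨ v.val = 1 ∨ (2 ≤ v.val ∧ v.val < n - 2) ∨
        (n - 2 ≤ v.val ∧ v.val < n)) with hv | hv | hv | hv
    · -- v = 0 : degree n-1, neighbor weight sum 3N-7
      have hadj : ∀ u : Fin n, (Hn1 n).Adj v u ↔ u.val ≠ 0 := by
        intro u
        rw [hn1_adj]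
        have := u.isLt
        omega
      have hdeg : (Hn1 n).degree v = n - 1 := by
        rw [neighbor_card (Hn1 n) v (fun i => i ≠ 0) hadj, card_ne (by omega : 0 < n)]
      have hsum : ∑ u ∈ (Hn1 n).neighborFinset v, s u
          = 2 * ((n - 1 : ℕ) : ℝ) + (N - 5) := by
        rw [show (∑ u ∈ (Hn1 n).neighborFinset v, s u)
            = ∑ u ∈ (Hn1 n).neighborFinset v, g u.val from rfl,
          neighbor_sum (Hn1 n) v (fun i => i ≠ 0) hadj, hgdef,
          sum_weight (by omega) (fun i => i ≠ 0) (N - 1) (N - 3) 2, card_ne (by omega : 0 < n)]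
        rw [if_neg (by omega : ¬¬(0:ℕ) = 0), if_pos (by omega : (1:ℕ) ≠ 0)]
        linarith
      rw [hdeg, hsum, hc1]
      have hsv : s v = N - 1 := by simp [hsdef, hgdef, hv]
      rw [hsv, hCdef, div_mul_cancel₀ _ (by nlinarith : N - 1 ≠ 0)]
      nlinarith
    · -- v = 1 : degree n-3
      have hadj : ∀ u : Fin n, (Hn1 n).Adj v u ↔ (u.val ≠ 1 ∧ u.val < n - 2) := by
        intro u
        rw [hn1_adj]
        have := u.isLt
        omega
      have hdeg : (Hn1 n).degree v = n - 3 := by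
        rw [neighbor_card (Hn1 n) v (fun i => i ≠ 1 ∧ i < n - 2) hadj, card_h1 hn]
      have hsum : ∑ u ∈ (Hn1 n).neighborFinset v, s u
          = 2 * ((n - 3 : ℕ) : ℝ) + (N - 3) := by
        rw [show (∑ u ∈ (Hn1 n).neighborFinset v, s u)
            = ∑ u ∈ (Hn1 n).neighborFinset v, g u.val from rfl,
          neighbor_sum (Hn1 n) v (fun i => i ≠ 1 ∧ i < n - 2) hadj, hgdef,
          sum_weight (by omega) (fun i => i ≠ 1 ∧ i < n - 2) (N - 1) (N - 3) 2, card_h1 hn]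
        rw [if_pos (by omega : (0:ℕ) ≠ 1 ∧ 0 < n - 2), if_neg (by omega : ¬((1:ℕ) ≠ 1 ∧ 1 < n - 2))]
        linarith
      rw [hdeg, hsum, hc3]
      have hsv : s v = N - 3 := by simp [hsdef, hgdef, hv]
      rw [hsv, hCdef, div_mul_eq_mul_div, le_div_iff₀ (by nlinarith : (0:ℝ) < N - 1)]
      nlinarith
    · -- middle vertices : degree 2
      have hadj : ∀ u : Fin n, (Hn1 n).Adj v u ↔ u.val < 2 := by
        intro u
        rw [hn1_adj]
        have := u.isLt
        omega
      have hdeg : (Hn1 n).degree v = 2 := by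
        rw [neighbor_card (Hn1 n) v (fun i => i < 2) hadj, card_lt2 (by omega)]
      have hsum : ∑ u ∈ (Hn1 n).neighborFinset v, s u = 2 * 2 + (N - 3) + (N - 5) := by
        rw [show (∑ u ∈ (Hn1 n).neighborFinset v, s u)
            = ∑ u ∈ (Hn1 n).neighborFinset v, g u.val from rfl,
          neighbor_sum (Hn1 n) v (fun i => i < 2) hadj, hgdef,
          sum_weight (by omega) (fun i => i < 2) (N - 1) (N - 3) 2, card_lt2 (by omega)]
        rw [if_pos (by omega : (0:ℕ) < 2), if_pos (by omega : (1:ℕ) < 2)]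
        push_cast
        linarith
      rw [hdeg, hsum]
      have hsv : s v = 2 := by
        simp only [hsdef, hgdef]
        rw [if_neg (by omega), if_neg (by omega)]
      rw [hsv, hCdef, div_mul_eq_mul_div, le_div_iff₀ (by nlinarith : (0:ℝ) < N - 1)]
      push_cast
      nlinarith
    · -- end vertices : degree 2
      have hadj : ∀ u : Fin n, (Hn1 n).Adj v u ↔ (u.val ≠ v.val ∧ (u.val = 0 ∨ n - 2 ≤ u.val)) := by
        intro u
        rw [hn1_adj]
        have := u.isLt
        omega
      have hdeg : (Hn1 n).degree v = 2 := by
        rw [neighbor_card (Hn1 n) v (fun i => i ≠ v.val ∧ (i = 0 ∨ n - 2 ≤ i)) hadj, card_hend hn hv.1 hv.2]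
      have hsum : ∑ u ∈ (Hn1 n).neighborFinset v, s u = 2 * 2 + (N - 3) := by
        rw [show (∑ u ∈ (Hn1 n).neighborFinset v, s u)
            = ∑ u ∈ (Hn1 n).neighborFinset v, g u.val from rfl,
          neighbor_sum (Hn1 n) v (fun i => i ≠ v.val ∧ (i = 0 ∨ n - 2 ≤ i)) hadj, hgdef,
          sum_weight (by omega) (fun i => i ≠ v.val ∧ (i = 0 ∨ n - 2 ≤ i)) (N - 1) (N - 3) 2, card_hend hn hv.1 hv.2]
        rw [if_pos (by omega : (0:ℕ) ≠ v.val ∧ ((0:ℕ) = 0 ∨ n - 2 ≤ 0)),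
          if_neg (by omega : ¬((1:ℕ) ≠ v.val ∧ ((1:ℕ) = 0 ∨ n - 2 ≤ 1)))]
        push_cast
        linarith
      rw [hdeg, hsum]
      have hsv : s v = 2 := by
        simp only [hsdef, hgdef]
        rw [if_neg (by omega), if_neg (by omega)]
      rw [hsv, hCdef, div_mul_eq_mul_div, le_div_iff₀ (by nlinarith : (0:ℝ) < N - 1)]
      push_cast
      nlinarith
  exact Real.sSup_le
    (fun μ hμ => spec_le_of_rowsum _ (Qmat_nonneg _) s hs C hC hrow hμ) hC

/-! ### Lower bound for `Snh n 2` -/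

lemma snh_lower {n : ℕ} (hn : 28 ≤ n) :
    ((n : ℝ) + 2 + Real.sqrt (((n : ℝ) + 2) ^ 2 - 16)) / 2 ≤ qspec (Snh n 2) := by
  set N : ℝ := (n : ℝ) with hNdef
  have hN : (28 : ℝ) ≤ N := by rw [hNdef]; exact_mod_cast hn
  have hD : (0 : ℝ) ≤ (N + 2) ^ 2 - 16 := by nlinarith
  set q : ℝ := (N + 2 + Real.sqrt ((N + 2) ^ 2 - 16)) / 2 with hqdef
  have hq2 : q ^ 2 - (N + 2) * q + 4 = 0 := by
    have hr : (Real.sqrt ((N + 2) ^ 2 - 16)) ^ 2 = (N + 2) ^ 2 - 16 := Real.sq_sqrt hD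
    rw [hqdef]; nlinarith [hr]
  set a : ℝ := (q - 2) / 2 with hadef
  set g : ℕ → ℝ := fun i => if i = 0 then a else if i = 1 then a else 1 with hgdef
  set x : Fin n → ℝ := fun v => g v.val with hxdef
  have hc1 : ((n - 1 : ℕ) : ℝ) = N - 1 := by
    rw [Nat.cast_sub (by omega)]; norm_num; exact hNdef.symm
  have hx0 : x ≠ 0 := by
    intro h
    have := congrFun h ⟨2, by omega⟩
    simp only [hxdef, hgdef, Pi.zero_apply] at this
    norm_num at this
  have heig : (Qmat (Snh n 2)).mulVec x = q • x := by
    funext v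
    rw [Qmat_mulVec_apply, Pi.smul_apply, smul_eq_mul]
    have hvlt := v.isLt
    rcases (by omega : v.val = 0 ∨ v.val = 1 ∨ 2 ≤ v.val) with hv | hv | hv
    · have hadj : ∀ u : Fin n, (Snh n 2).Adj v u ↔ u.val ≠ 0 := by
        intro u; rw [snh_adj]; have := u.isLt; omega
      have hdeg : (Snh n 2).degree v = n - 1 := by
        rw [neighbor_card (Snh n 2) v (fun i => i ≠ 0) hadj, card_ne (by omega : 0 < n)]
      have hsum : ∑ u ∈ (Snh n 2).neighborFinset v, x u = (N - 1) + (a - 1) := by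
        rw [show (∑ u ∈ (Snh n 2).neighborFinset v, x u)
            = ∑ u ∈ (Snh n 2).neighborFinset v, g u.val from rfl,
          neighbor_sum (Snh n 2) v (fun i => i ≠ 0) hadj, hgdef,
          sum_weight (by omega) (fun i => i ≠ 0) a a 1, card_ne (by omega : 0 < n), hc1]
        rw [if_neg (by omega : ¬¬(0:ℕ) = 0), if_pos (by omega : (1:ℕ) ≠ 0)]
        linarith
      have hxv : x v = a := by simp [hxdef, hgdef, hv]
      rw [hdeg, hsum, hc1, hxv, hadef]
      linear_combination (-1/2 : ℝ) * hq2
    · have hadj : ∀ u : Fin n, (Snh n 2).Adj v u ↔ u.val ≠ 1 := by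
        intro u; rw [snh_adj]; have := u.isLt; omega
      have hdeg : (Snh n 2).degree v = n - 1 := by
        rw [neighbor_card (Snh n 2) v (fun i => i ≠ 1) hadj, card_ne (by omega : 1 < n)]
      have hsum : ∑ u ∈ (Snh n 2).neighborFinset v, x u = (N - 1) + (a - 1) := by
        rw [show (∑ u ∈ (Snh n 2).neighborFinset v, x u)
            = ∑ u ∈ (Snh n 2).neighborFinset v, g u.val from rfl,
          neighbor_sum (Snh n 2) v (fun i => i ≠ 1) hadj, hgdef,
          sum_weight (by omega) (fun i => i ≠ 1) a a 1, card_ne (by omega : 1 < n), hc1]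
        rw [if_pos (by omega : (0:ℕ) ≠ 1), if_neg (by omega : ¬¬(1:ℕ) = 1)]
        linarith
      have hxv : x v = a := by simp [hxdef, hgdef, hv]
      rw [hdeg, hsum, hc1, hxv, hadef]
      linear_combination (-1/2 : ℝ) * hq2
    · have hadj : ∀ u : Fin n, (Snh n 2).Adj v u ↔ u.val < 2 := by
        intro u; rw [snh_adj]; have := u.isLt; omega
      have hdeg : (Snh n 2).degree v = 2 := by
        rw [neighbor_card (Snh n 2) v (fun i => i < 2) hadj, card_lt2 (by omega)]
      have hsum : ∑ u ∈ (Snh n 2).neighborFinset v, x u = 2 * a := by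
        rw [show (∑ u ∈ (Snh n 2).neighborFinset v, x u)
            = ∑ u ∈ (Snh n 2).neighborFinset v, g u.val from rfl,
          neighbor_sum (Snh n 2) v (fun i => i < 2) hadj, hgdef,
          sum_weight (by omega) (fun i => i < 2) a a 1, card_lt2 (by omega)]
        rw [if_pos (by omega : (0:ℕ) < 2), if_pos (by omega : (1:ℕ) < 2)]
        push_cast
        ring
      have hxv : x v = 1 := by
        simp only [hxdef, hgdef]
        rw [if_neg (by omega), if_neg (by omega)]
      rw [hdeg, hsum, hxv, hadef]
      push_cast
      ring
  have hmem : q ∈ spectrum ℝ (Qmat (Snh n 2)) := mem_spectrum_of_eigvec _ hx0 heig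
  have hbdd : BddAbove (spectrum ℝ (Qmat (Snh n 2))) := by
    refine ⟨2 * N, fun μ hμ => ?_⟩
    refine spec_le_of_rowsum _ (Qmat_nonneg _) (fun _ => 1) (fun _ => one_pos)
      (2 * N) (by linarith) (fun v => ?_) hμ
    rw [Qmat_rowsum]
    simp only [Finset.sum_const, nsmul_eq_mul, mul_one,
      SimpleGraph.card_neighborFinset_eq_degree]
    have hdlt : (Snh n 2).degree v < n := by
      have := SimpleGraph.degree_lt_card_verts (G := Snh n 2) v
      simpa using this
    have : ((Snh n 2).degree v : ℝ) ≤ N - 1 := by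
      rw [← hc1]
      exact_mod_cast Nat.le_sub_one_of_lt hdlt
    linarith
  exact le_csSup hbdd hmem

/-- `q(H_{n,1}) < q(S_{n,2})` for `n ≥ 28`. -/
theorem stmt_11 (n : ℕ) (hn : 28 ≤ n) : qspec (Hn1 n) < qspec (Snh n 2) := by
  set N : ℝ := (n : ℝ) with hNdef
  have hN : (28 : ℝ) ≤ N := by rw [hNdef]; exact_mod_cast hn
  have hN1 : (0 : ℝ) < N - 1 := by linarith
  have key : (N ^ 2 + N - 6) / (N - 1)
      < (N + 2 + Real.sqrt ((N + 2) ^ 2 - 16)) / 2 := by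
    have h1 : (2 * ((N ^ 2 + N - 6) / (N - 1)) - (N + 2)) ^ 2 < (N + 2) ^ 2 - 16 := by
      have h2 : 2 * ((N ^ 2 + N - 6) / (N - 1)) - (N + 2)
          = (N ^ 2 + N - 10) / (N - 1) := by
        field_simp
        ring
      rw [h2, div_pow, div_lt_iff₀ (by positivity)]
      nlinarith
    have h3 : 2 * ((N ^ 2 + N - 6) / (N - 1)) - (N + 2)
        < Real.sqrt ((N + 2) ^ 2 - 16) := Real.lt_sqrt_of_sq_lt h1
    linarith
  calc qspec (Hn1 n) ≤ (N ^ 2 + N - 6) / (N - 1) := hn1_upper hn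
    _ < (N + 2 + Real.sqrt ((N + 2) ^ 2 - 16)) / 2 := key
    _ ≤ qspec (Snh n 2) := snh_lower hn
end
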